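/- arXiv:1705.02880 — 2 statements merged into one kernel-verified Lean document; each statement's English description precedes it below -/
import Mathlib

section
/- Given a complete contraction (f,g,K) from a complete dg space (V, F•V, d_V) onto (W, d_W), the induced filtration F^pW = f^{-1}(F^pV) makes (W, d_W) a complete dg space, and f and g are continuous with respect to these filtrations. -/
open scoped BigOperators Classical

universe u

noncomputable section

/-- Extend a finite tuple by zero. -/
def extZ {M : Type u} [Zero M] {n : ℕ} (v : Fin n → M) : ℕ → M :=
  fun m => if h : m < n then v ⟨m, h⟩ else 0

/-- Extend a permutation of `Fin n` to `ℕ`. -/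
def permExt {n : ℕ} (σ : Equiv.Perm (Fin n)) : ℕ → ℕ :=
  fun m => if h : m < n then (σ ⟨m, h⟩ : ℕ) else m

/-- Koszul sign of a permutation acting on homogeneous elements of (unshifted)
degrees `d i` (the sign is computed with respect to the shifted degrees `d i - 1`). -/
def koszulSign {n : ℕ} (d : Fin n → ℤ) (σ : Equiv.Perm (Fin n)) : ℤ :=
  ∏ p ∈ Finset.univ.filter (fun p : Fin n × Fin n => p.1 < p.2 ∧ σ p.2 < σ p.1),
    (-1) ^ ((d (σ p.1) - 1) * (d (σ p.2) - 1)).natAbs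

/-- `σ` is an `(a, n-a)`-unshuffle: it is strictly increasing on positions `< a`
and on positions `≥ a`. -/
def IsUnshuffle {n : ℕ} (a : ℕ) (σ : Equiv.Perm (Fin n)) : Prop :=
  (∀ i j : Fin n, i < j → (j : ℕ) < a → σ i < σ j) ∧
  (∀ i j : Fin n, i < j → a ≤ (i : ℕ) → σ i < σ j)

/-- Offset of the `b`-th block for a composition `c`. -/
def blockOffset {k : ℕ} (c : Fin k → ℕ) (b : Fin k) : ℕ :=
  ∑ b' ∈ Finset.univ.filter (fun b' => b' < b), c b'

/-- `σ` is a `(c 0, …, c (k-1))`-unshuffle: strictly increasing on each block. -/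
def IsBlockUnshuffle {n k : ℕ} (c : Fin k → ℕ) (σ : Equiv.Perm (Fin n)) : Prop :=
  ∀ (b : Fin k) (i j : Fin n), i < j → blockOffset c b ≤ (i : ℕ) →
    (j : ℕ) < blockOffset c b + c b → σ i < σ j

variable (K : Type u) [Field K] [CharZero K]

/-- The corestriction of the composition `F ∘ Q` of a coderivation with Taylor
coefficients `q` followed by a coalgebra morphism with Taylor coefficients `f`,
evaluated on the symmetric word with homogeneous entries `v` of degrees `d`. -/
def codTaylor {M N : Type u} [AddCommGroup M] [Module K M] [AddCommGroup N] [Module K N]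
    (f : (n : ℕ) → MultilinearMap K (fun _ : Fin n => M) N)
    (q : (n : ℕ) → MultilinearMap K (fun _ : Fin n => M) M)
    (n : ℕ) (d : Fin n → ℤ) (v : Fin n → M) : N :=
  ∑ a ∈ Finset.range (n + 1), ∑ σ ∈ Finset.univ.filter (IsUnshuffle a),
    koszulSign d σ •
      f (n - a + 1) (Fin.cons (q a (fun t : Fin a => extZ v (permExt σ t)))
        (fun t : Fin (n - a) => extZ v (permExt σ (a + t))))

/-- The corestriction of the composition `G ∘ F` of coalgebra morphisms with Taylor
coefficients `f` and `g`, with the outer arity ranging over `[lo, n]`.  For `lo = 1`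
this is the Taylor coefficient of the composite morphism; for `lo = 2` it is the
expression appearing in the homotopy transfer recursions. -/
def compTaylor {M N P : Type u} [AddCommGroup M] [Module K M] [AddCommGroup N] [Module K N]
    [AddCommGroup P] [Module K P]
    (g : (k : ℕ) → MultilinearMap K (fun _ : Fin k => N) P)
    (f : (m : ℕ) → MultilinearMap K (fun _ : Fin m => M) N)
    (lo n : ℕ) (d : Fin n → ℤ) (v : Fin n → M) : P :=
  ∑ k ∈ Finset.Icc lo n, (k.factorial : K)⁻¹ •
    ∑ c ∈ Finset.univ.filter
        (fun c : Fin k → Fin (n + 1) => (∀ b, 1 ≤ (c b : ℕ)) ∧ (∑ b, (c b : ℕ)) = n),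
      ∑ σ ∈ Finset.univ.filter (IsBlockUnshuffle (fun b => (c b : ℕ))),
        koszulSign d σ •
          g k (fun b => f (c b : ℕ) (fun t : Fin (c b : ℕ) =>
            extZ v (permExt σ (blockOffset (fun b' => (c b' : ℕ)) b + t))))

/-- Convergence of a sequence with respect to the topology defined by a
descending filtration. -/
def Converges {M : Type u} [AddCommGroup M] [Module K M]
    (filt : ℕ → Submodule K M) (s : ℕ → M) (x : M) : Prop :=
  ∀ p : ℕ, ∃ N : ℕ, ∀ m, N ≤ m → x - s m ∈ filt p

/-- A complete filtered `L∞` algebra structure on the module `M` (curvature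
conventions are those of `L∞[1]`-algebras transported to the unshifted grading:
Maurer-Cartan elements live in degree `1`). -/
structure CLInfStr (M : Type u) [AddCommGroup M] [Module K M] where
  gr : ℤ → Submodule K M
  filt : ℕ → Submodule K M
  filt_one : filt 1 = ⊤
  filt_anti : ∀ p, filt (p + 1) ≤ filt p
  haus : ∀ x : M, (∀ p, x ∈ filt p) → x = 0
  compl : ∀ s : ℕ → M, (∀ p : ℕ, ∃ N, ∀ m n, N ≤ m → N ≤ n → s m - s n ∈ filt p) →
    ∃ x : M, Converges K filt s x
  q : (n : ℕ) → MultilinearMap K (fun _ : Fin n => M) M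
  q_zero : q 0 = 0
  q_gr : ∀ (n : ℕ) (d : Fin n → ℤ) (v : Fin n → M), (∀ i, v i ∈ gr (d i)) →
    q n v ∈ gr (2 - n + ∑ i, d i)
  q_filt : ∀ (n : ℕ) (p : Fin n → ℕ) (v : Fin n → M), (∀ i, v i ∈ filt (p i)) →
    q n v ∈ filt (∑ i, p i)
  q_symm : ∀ (n : ℕ) (d : Fin n → ℤ) (v : Fin n → M), (∀ i, v i ∈ gr (d i)) →
    ∀ σ : Equiv.Perm (Fin n), q n (v ∘ σ) = koszulSign d σ • q n v
  jacobi : ∀ (n : ℕ) (d : Fin n → ℤ) (v : Fin n → M), (∀ i, v i ∈ gr (d i)) →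
    codTaylor K q q n d v = 0

variable {K}

/-- Partial sums of the curvature series `∑ (1/n!) qₙ(x,…,x)`. -/
def curvP {M : Type u} [AddCommGroup M] [Module K M]
    (q : (n : ℕ) → MultilinearMap K (fun _ : Fin n => M) M) (x : M) : ℕ → M :=
  fun N => ∑ n ∈ Finset.Icc 1 N, (n.factorial : K)⁻¹ • q n (fun _ => x)

/-- Partial sums of the push-forward series `∑ (1/n!) fₙ(x,…,x)`. -/
def pushP {M N : Type u} [AddCommGroup M] [Module K M] [AddCommGroup N] [Module K N]
    (f : (n : ℕ) → MultilinearMap K (fun _ : Fin n => M) N) (x : M) : ℕ → N :=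
  fun N' => ∑ n ∈ Finset.Icc 1 N', (n.factorial : K)⁻¹ • f n (fun _ => x)

/-- The Maurer-Cartan set: degree-one elements whose curvature series converges
to zero. -/
def MCset {M : Type u} [AddCommGroup M] [Module K M]
    (gr : ℤ → Submodule K M) (filt : ℕ → Submodule K M)
    (q : (n : ℕ) → MultilinearMap K (fun _ : Fin n => M) M) : Set M :=
  {x | x ∈ gr 1 ∧ Converges K filt (curvP q x) 0}

variable (K)

/-- A continuous `L∞` morphism between complete `L∞` algebras, given by its
Taylor coefficients. -/
structure LMor {M N : Type u} [AddCommGroup M] [Module K M] [AddCommGroup N] [Module K N]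
    (L : CLInfStr K M) (L' : CLInfStr K N) where
  f : (n : ℕ) → MultilinearMap K (fun _ : Fin n => M) N
  f_zero : f 0 = 0
  f_gr : ∀ (n : ℕ) (d : Fin n → ℤ) (v : Fin n → M), (∀ i, v i ∈ L.gr (d i)) →
    f n v ∈ L'.gr (1 - n + ∑ i, d i)
  f_filt : ∀ (n : ℕ) (p : Fin n → ℕ) (v : Fin n → M), (∀ i, v i ∈ L.filt (p i)) →
    f n v ∈ L'.filt (∑ i, p i)
  compat : ∀ (n : ℕ) (d : Fin n → ℤ) (v : Fin n → M), (∀ i, v i ∈ L.gr (d i)) →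
    codTaylor K f L.q n d v = compTaylor K L'.q f 1 n d v

end

noncomputable section

/-- The linear part `q₁` of an `L∞` structure, as a linear map (the differential of
the tangent complex). -/
def CLInfStr.d {K : Type u} [Field K] [CharZero K]
    {M : Type u} [AddCommGroup M] [Module K M] (L : CLInfStr K M) : M →ₗ[K] M where
  toFun x := L.q 1 (fun _ => x)
  map_add' a b := by
    have h : ∀ x : M, (fun _ : Fin 1 => x) = Function.update (fun _ : Fin 1 => (0:M)) 0 x := by
      intro x; funext i; rw [Subsingleton.elim i 0]; simp
    show L.q 1 (fun _ => a + b) = L.q 1 (fun _ => a) + L.q 1 (fun _ => b)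
    rw [h (a + b), h a, h b, MultilinearMap.map_update_add]
  map_smul' c a := by
    have h : ∀ x : M, (fun _ : Fin 1 => x) = Function.update (fun _ : Fin 1 => (0:M)) 0 x := by
      intro x; funext i; rw [Subsingleton.elim i 0]; simp
    show L.q 1 (fun _ => c • a) = c • L.q 1 (fun _ => a)
    rw [h (c • a), h a, MultilinearMap.map_update_smul]

end

noncomputable section

variable (K : Type u) [Field K] [CharZero K]

/-- A complete dg space: a graded module with a complete descending filtration
`F¹V = V ⊃ F²V ⊃ ⋯` and a continuous differential of degree one. -/
structure CDGStr (M : Type u) [AddCommGroup M] [Module K M] where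
  gr : ℤ → Submodule K M
  filt : ℕ → Submodule K M
  filt_one : filt 1 = ⊤
  filt_anti : ∀ p, filt (p + 1) ≤ filt p
  haus : ∀ x : M, (∀ p, x ∈ filt p) → x = 0
  compl : ∀ s : ℕ → M, (∀ p : ℕ, ∃ N, ∀ m n, N ≤ m → N ≤ n → s m - s n ∈ filt p) →
    ∃ x : M, Converges K filt s x
  d : M →ₗ[K] M
  d_sq : ∀ x, d (d x) = 0
  d_gr : ∀ (z : ℤ) (x : M), x ∈ gr z → d x ∈ gr (z + 1)
  d_filt : ∀ (p : ℕ) (x : M), x ∈ filt p → d x ∈ filt p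

/-- **Induced filtration on the target of a complete contraction**.
Given a complete contraction `(f, g, K)` from a complete dg space `(V, F•V, d_V)`
onto a dg space `(W, d_W)`, the induced filtration `FᵖW = f⁻¹(FᵖV)` makes
`(W, d_W)` a complete dg space (Hausdorff and sequentially complete), and `f`
and `g` are continuous with respect to these filtrations. -/
theorem contraction_induced_filtration
    (M N : Type u) [AddCommGroup M] [Module K M] [AddCommGroup N] [Module K N]
    (V : CDGStr K M)
    -- the dg space `(W, d_W)`
    (grW : ℤ → Submodule K N) (dW : N →ₗ[K] N)
    (hdW_sq : ∀ x, dW (dW x) = 0)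
    (hdW_gr : ∀ (z : ℤ) (x : N), x ∈ grW z → dW x ∈ grW (z + 1))
    -- the contraction data
    (f : N →ₗ[K] M) (g : M →ₗ[K] N) (Kh : M →ₗ[K] M)
    (hf_chain : ∀ x : N, f (dW x) = V.d (f x))
    (hg_chain : ∀ x : M, dW (g x) = g (V.d x))
    (hgf : ∀ x : N, g (f x) = x)
    (hhtp : ∀ x : M, Kh (V.d x) + V.d (Kh x) = f (g x) - x)
    (hKf : ∀ x : N, Kh (f x) = 0)
    (hKK : ∀ x : M, Kh (Kh x) = 0)
    (hgK : ∀ x : M, g (Kh x) = 0)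
    (hK_filt : ∀ (p : ℕ) (x : M), x ∈ V.filt p → Kh x ∈ V.filt p)
    (hfg_filt : ∀ (p : ℕ) (x : M), x ∈ V.filt p → f (g x) ∈ V.filt p) :
    -- `W` with the filtration `FᵖW = f⁻¹(FᵖV)` is Hausdorff …
    (∀ x : N, (∀ p, x ∈ (V.filt p).comap f) → x = 0) ∧
    -- … exhaustive …
    ((V.filt 1).comap f = ⊤) ∧ (∀ p, (V.filt (p + 1)).comap f ≤ (V.filt p).comap f) ∧
    -- … and complete, so `(W, d_W)` is a complete dg space …
    (∀ s : ℕ → N,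
      (∀ p : ℕ, ∃ N', ∀ m n, N' ≤ m → N' ≤ n → s m - s n ∈ (V.filt p).comap f) →
      ∃ x : N, Converges K (fun p => (V.filt p).comap f) s x) ∧
    -- … `d_W` is continuous …
    (∀ (p : ℕ) (x : N), x ∈ (V.filt p).comap f → dW x ∈ (V.filt p).comap f) ∧
    -- … and `f`, `g` are continuous
    (∀ (p : ℕ) (x : N), x ∈ (V.filt p).comap f → f x ∈ V.filt p) ∧
    (∀ (p : ℕ) (x : M), x ∈ V.filt p → g x ∈ (V.filt p).comap f) := by
  refine ⟨?_, ?_, ?_, ?_, ?_, ?_, ?_⟩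
  · intro x hx
    have : f x = 0 := V.haus _ (fun p => hx p)
    calc x = g (f x) := (hgf x).symm
    _ = 0 := by rw [this, map_zero]
  · rw [V.filt_one]; ext x; simp
  · intro p x hx
    exact V.filt_anti p hx
  · intro s hs
    obtain ⟨y, hy⟩ := V.compl (fun n => f (s n)) (by
      intro p
      obtain ⟨N', hN'⟩ := hs p
      exact ⟨N', fun m n hm hn => by
        simpa [map_sub] using hN' m n hm hn⟩)
    refine ⟨g y, fun p => ?_⟩
    obtain ⟨N', hN'⟩ := hy p
    refine ⟨N', fun m hm => ?_⟩
    have h1 : y - f (s m) ∈ V.filt p := hN' m hm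
    have h2 : f (g (y - f (s m))) ∈ V.filt p := hfg_filt p _ h1
    have : f (g y - s m) = f (g (y - f (s m))) := by
      simp [map_sub, hgf]
    simpa [Submodule.mem_comap, this] using h2
  · intro p x hx
    simpa [Submodule.mem_comap, hf_chain] using V.d_filt p _ hx
  · intro p x hx
    exact hx
  · intro p x hx
    exact hfg_filt p x hx

end
end

section
/- Let 0 → K → L → M → 0 be a central extension of complete L∞ algebras and x ∈ MC(M). If the set of Maurer-Cartan liftings of x in L is nonempty, it is a torsor under the additive group Z¹(K): for any Maurer-Cartan lifting y ∈ MC(L) of x, the map Z¹(K) → MC(L), z ↦ y + z, is a bijection onto the set of all Maurer-Cartan liftings of x. -/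
open scoped BigOperators Classical

universe u

noncomputable section

variable (K : Type u) [Field K] [CharZero K]
variable {M P : Type u} [AddCommGroup M] [Module K M] [AddCommGroup P] [Module K P]

/-- `p : L → B` is a central extension of complete `L∞` algebras: a surjective
(in each degree) continuous strict `L∞` morphism whose kernel is an abelian `L∞`
ideal (the higher brackets of `L` vanish whenever one argument lies in the kernel). -/
structure IsCentralExtension (L : CLInfStr K M) (B : CLInfStr K P)
    (p : M →ₗ[K] P) : Prop where
  strict : ∀ (n : ℕ) (v : Fin n → M), p (L.q n v) = B.q n (fun i => p (v i))
  p_gr : ∀ (z : ℤ) (x : M), x ∈ L.gr z → p x ∈ B.gr z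
  p_filt : ∀ (q : ℕ) (x : M), x ∈ L.filt q → p x ∈ B.filt q
  surj : ∀ (z : ℤ), ∀ w ∈ B.gr z, ∃ x ∈ L.gr z, p x = w
  central : ∀ (n : ℕ), 2 ≤ n → ∀ v : Fin n → M, (∃ i, p (v i) = 0) → L.q n v = 0

/-- **Maurer-Cartan liftings form a torsor** (paper, Proposition 2.6, last part).
Let `0 → K → L → M → 0` be a central extension of complete `L∞` algebras,
`x ∈ MC(M)`, and let `y ∈ MC(L)` be a Maurer-Cartan lifting of `x`.  Then the map
`Z¹(K) → MC(L), z ↦ y + z`, is a bijection from the degree-one cocycles of the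
kernel onto the set of all Maurer-Cartan liftings of `x`. -/
theorem central_extension_torsor
    (L : CLInfStr K M) (B : CLInfStr K P) (p : M →ₗ[K] P)
    (hext : IsCentralExtension K L B p)
    (x : P) (hx : x ∈ MCset B.gr B.filt B.q)
    (y : M) (hy : y ∈ MCset L.gr L.filt L.q) (hpy : p y = x) :
    Set.BijOn (fun z : M => y + z)
      {z : M | p z = 0 ∧ z ∈ L.gr 1 ∧ L.d z = 0}
      {y' : M | y' ∈ MCset L.gr L.filt L.q ∧ p y' = x} := by
  have hd : ∀ w : M, L.d w = L.q 1 (fun _ => w) := fun _ => rfl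
  -- Higher brackets are unchanged by adding a kernel element.
  have expand : ∀ (z : M), p z = 0 → ∀ n : ℕ, 2 ≤ n →
      L.q n (fun _ => y + z) = L.q n (fun _ => y) := by
    intro z hz n hn
    have hsplit : (fun _ : Fin n => y + z) = (fun _ : Fin n => z) + (fun _ : Fin n => y) := by
      funext i; simp [add_comm]
    rw [hsplit, MultilinearMap.map_add_univ, Finset.sum_eq_single (∅ : Finset (Fin n))]
    · simp
    · intro s _ hs
      apply hext.central n hn
      obtain ⟨i, hi⟩ := Finset.nonempty_iff_ne_empty.2 hs
      exact ⟨i, by simp [Finset.piecewise_eq_of_mem _ _ _ hi, hz]⟩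
    · simp
  -- Curvature shift: `R(y+z) = R(y) + q₁ z` (partial sums, for `N ≥ 1`).
  have curvshift : ∀ (z : M), p z = 0 → ∀ N : ℕ, 1 ≤ N →
      curvP L.q (y + z) N = curvP L.q y N + L.d z := by
    intro z hz N hN
    unfold curvP
    have h1 : ∀ n ∈ Finset.Icc 1 N,
        (n.factorial : K)⁻¹ • L.q n (fun _ => y + z)
          = (n.factorial : K)⁻¹ • L.q n (fun _ => y) + (if n = 1 then L.d z else 0) := by
      intro n hn
      rcases eq_or_lt_of_le (Finset.mem_Icc.1 hn).1 with h | h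
      · have e1 : L.d (y + z) = L.d y + L.d z := L.d.map_add y z
        subst h
        simp only [if_pos rfl, Nat.factorial_one, Nat.cast_one, inv_one, one_smul]
        rw [← hd, ← hd, e1]; simp
      · rw [expand z hz n h, if_neg (by omega), add_zero]
    rw [Finset.sum_congr rfl h1, Finset.sum_add_distrib]
    congr 1
    rw [Finset.sum_ite_eq' (Finset.Icc 1 N) 1 (fun _ => L.d z),
      if_pos (Finset.mem_Icc.2 ⟨le_refl 1, hN⟩)]
  refine ⟨?_, ?_, ?_⟩
  · -- MapsTo
    rintro z ⟨hpz, hzg, hzd⟩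
    refine ⟨⟨Submodule.add_mem _ hy.1 hzg, ?_⟩, by simp [map_add, hpz, hpy]⟩
    intro pp
    obtain ⟨Np, hNp⟩ := hy.2 pp
    refine ⟨max Np 1, fun m hm => ?_⟩
    rw [curvshift z hpz m (le_trans (le_max_right _ _) hm), hzd, add_zero]
    exact hNp m (le_trans (le_max_left _ _) hm)
  · -- InjOn
    intro a _ b _ h
    simpa using h
  · -- SurjOn
    rintro y' ⟨⟨hy'1, hy'c⟩, hpy'⟩
    refine ⟨y' - y, ⟨?_, Submodule.sub_mem _ hy'1 hy.1, ?_⟩, by simp⟩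
    · simp [map_sub, hpy, hpy']
    · set z := y' - y with hzdef
      have hz : p z = 0 := by simp [hzdef, map_sub, hpy, hpy']
      have hyz : y + z = y' := by simp [hzdef]
      apply L.haus
      intro pp
      obtain ⟨N1, h1⟩ := hy.2 pp
      obtain ⟨N2, h2⟩ := hy'c pp
      have e := curvshift z hz (max (max N1 N2) 1) (le_max_right _ _)
      rw [hyz] at e
      have a1 := h1 (max (max N1 N2) 1) (le_trans (le_max_left _ _) (le_max_left _ _))
      have a2 := h2 (max (max N1 N2) 1) (le_trans (le_max_right _ _) (le_max_left _ _))
      have key : L.d z = (0 - curvP L.q y (max (max N1 N2) 1))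
          - (0 - curvP L.q y' (max (max N1 N2) 1)) := by
        rw [e]; abel
      rw [key]
      exact Submodule.sub_mem _ a1 a2

end
end
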